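/- arXiv:2104.03484 — 6 statements merged into one kernel-verified Lean document; each statement's English description precedes it below -/
import Mathlib

section
/- Let (X,d) be a finite metric space with weight function w: X → ℝ⁺, let Δ satisfy 0 < Δ ≤ diam(X)/2, and let t ≥ 2 be an integer. Then there exists a point v ∈ X and an index 1 ≤ i ≤ t such that, setting Q = B(v,(1+i/t)Δ/4) and P = B(v,(1+(i-1)/t)Δ/4), one has w(Q_i) ≤ w(Q_{i-1})·(w(B(v,Δ/2))/w(B(v,Δ/4)))^{1/t}, i.e. w(P) ≥ w(Q)·(w(B(v,Δ/2))/w(B(v,Δ/4)))^{-1/t}. -/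
/-!
For any centre `v`, the weights `g i` of the balls of radius `(1 + i / t) * Δ / 4` satisfy
`∏_{i < t} g (i + 1) / g i = g t / g 0`, so one of these `t` ratios is at most the geometric
mean `(g t / g 0) ^ (1 / t)`. Taking logarithms turns this into the additive pigeonhole
principle for a telescoping sum.
-/

open Finset

theorem exists_increment_le_average (a : ℕ → ℝ) {t : ℕ} (ht : t ≠ 0) :
    ∃ i < t, a (i + 1) - a i ≤ (a t - a 0) / t := by
  have hsum : ∑ i ∈ range t, (a (i + 1) - a i) ≤ ∑ _i ∈ range t, (a t - a 0) / t := by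
    rw [sum_range_sub, sum_const, card_range, nsmul_eq_mul, mul_div_cancel₀ _ (by positivity)]
  obtain ⟨i, hi, hle⟩ := exists_le_of_sum_le (nonempty_range_iff.mpr ht) hsum
  exact ⟨i, mem_range.mp hi, hle⟩

theorem exists_succ_le_mul_rpow_div {g : ℕ → ℝ} (hg : ∀ i, 0 < g i) {t : ℕ} (ht : t ≠ 0) :
    ∃ i < t, g (i + 1) ≤ g i * (g t / g 0) ^ ((1 : ℝ) / t) := by
  obtain ⟨i, hit, hi⟩ := exists_increment_le_average (fun i => Real.log (g i)) ht
  refine ⟨i, hit, ?_⟩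
  rw [Real.rpow_def_of_pos (div_pos (hg t) (hg 0)), Real.log_div (hg t).ne' (hg 0).ne',
    ← Real.exp_log (hg i), ← Real.exp_add, ← Real.exp_log (hg (i + 1)), Real.exp_le_exp,
    mul_one_div]
  linarith

theorem sum_filter_dist_le_pos {X : Type*} [PseudoMetricSpace X] [Fintype X] {w : X → ℝ}
    (hw : ∀ x, 0 < w x) (v : X) {r : ℝ} (hr : 0 ≤ r) :
    0 < ∑ u ∈ univ.filter (fun u => dist u v ≤ r), w u :=
  sum_pos (fun u _ => hw u) ⟨v, by simpa using hr⟩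

theorem stmt_0_general {X : Type*} [MetricSpace X] [Fintype X] [Nonempty X]
    (w : X → ℝ) (hw : ∀ x, 0 < w x)
    (Δ : ℝ) (hΔ : 0 < Δ)
    (t : ℕ) (ht : 2 ≤ t) :
    ∃ (v : X) (i : ℕ), 1 ≤ i ∧ i ≤ t ∧
      (∑ u ∈ Finset.univ.filter (fun u => dist u v ≤ (1 + (i : ℝ) / t) * Δ / 4), w u)
        ≤ (∑ u ∈ Finset.univ.filter (fun u => dist u v ≤ (1 + ((i : ℝ) - 1) / t) * Δ / 4), w u)
          * ((∑ u ∈ Finset.univ.filter (fun u => dist u v ≤ Δ / 2), w u)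
            / (∑ u ∈ Finset.univ.filter (fun u => dist u v ≤ Δ / 4), w u)) ^ ((1 : ℝ) / t) := by
  obtain ⟨v⟩ := ‹Nonempty X›
  have ht0 : (t : ℝ) ≠ 0 := by positivity
  set g : ℕ → ℝ := fun i =>
    ∑ u ∈ univ.filter (fun u => dist u v ≤ (1 + (i : ℝ) / t) * Δ / 4), w u
  have hg : ∀ i, 0 < g i := fun i => sum_filter_dist_le_pos hw v (by positivity)
  have hg0 : g 0 = ∑ u ∈ univ.filter (fun u => dist u v ≤ Δ / 4), w u := by simp [g]
  have hgt : g t = ∑ u ∈ univ.filter (fun u => dist u v ≤ Δ / 2), w u := by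
    simp only [g, div_self ht0]; ring_nf
  obtain ⟨i, hit, hi⟩ := exists_succ_le_mul_rpow_div hg (by omega : t ≠ 0)
  refine ⟨v, i + 1, by omega, hit, ?_⟩
  rw [← hg0, ← hgt]
  simpa [g] using hi

/-- pigeonhole over annuli in the Ramsey decomposition. -/
theorem stmt_0 {X : Type*} [MetricSpace X] [Fintype X] [Nonempty X]
    (w : X → ℝ) (hw : ∀ x, 0 < w x)
    (Δ : ℝ) (hΔ : 0 < Δ) (hΔ2 : Δ ≤ Metric.diam (Set.univ : Set X) / 2)
    (t : ℕ) (ht : 2 ≤ t) :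
    ∃ (v : X) (i : ℕ), 1 ≤ i ∧ i ≤ t ∧
      (∑ u ∈ Finset.univ.filter (fun u => dist u v ≤ (1 + (i : ℝ) / t) * Δ / 4), w u)
        ≤ (∑ u ∈ Finset.univ.filter (fun u => dist u v ≤ (1 + ((i : ℝ) - 1) / t) * Δ / 4), w u)
          * ((∑ u ∈ Finset.univ.filter (fun u => dist u v ≤ Δ / 2), w u)
            / (∑ u ∈ Finset.univ.filter (fun u => dist u v ≤ Δ / 4), w u)) ^ ((1 : ℝ) / t) :=
  stmt_0_general w hw Δ hΔ t ht
end

section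
/- Let (X,d) be a finite metric space with positive weight function w, let 0 < Δ ≤ diam(X)/2, and let t ≥ 2 be an integer. Then there exists a partition (Q, X∖Q) of X and a subset P ⊆ Q such that diam(Q) ≤ Δ, d(P, X∖Q) ≥ Δ/(4t), and w(P) ≥ w(Q)·(β(X)/β(Q))^{-1/t}, where β(Z) = max_{z∈Z} w(B(z, diam(Z)/4)) is the spherical weight of Z. -/
open Finset

/-- The weight of the ball of radius `r` around `v`. -/
noncomputable def ballWeight {X : Type*} [MetricSpace X] [Fintype X] (w : X → ℝ)
    (v : X) (r : ℝ) : ℝ :=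
  ∑ u ∈ Finset.univ.filter (fun u => dist u v ≤ r), w u

/-- The spherical weight `β(Z) = max_{z ∈ Z} w(B(z, diam(Z)/4))`. -/
noncomputable def sphWeight {X : Type*} [MetricSpace X] [Fintype X] (w : X → ℝ)
    (Z : Finset X) (hZ : Z.Nonempty) : ℝ :=
  Z.sup' hZ (fun z => ballWeight w z (Metric.diam (Z : Set X) / 4))

lemma ballWeight_mono {X : Type*} [MetricSpace X] [Fintype X] (w : X → ℝ)
    (hw : ∀ x, 0 ≤ w x) (v : X) {r s : ℝ} (h : r ≤ s) :
    ballWeight w v r ≤ ballWeight w v s := by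
  apply Finset.sum_le_sum_of_subset_of_nonneg
  · intro u hu
    simp only [mem_filter, mem_univ, true_and] at *
    exact hu.trans h
  · intro i _ _; exact hw i

lemma ballWeight_pos {X : Type*} [MetricSpace X] [Fintype X] (w : X → ℝ)
    (hw : ∀ x, 0 < w x) (v : X) {r : ℝ} (h : 0 ≤ r) :
    0 < ballWeight w v r := by
  apply Finset.sum_pos (fun x _ => hw x)
  exact ⟨v, by simp [dist_self, h]⟩

lemma exists_good_index (f : ℕ → ℝ) (t : ℕ) (ht : 0 < t)
    (h0 : 0 < f 0) (hpos : 0 < f t) :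
    ∃ i < t, f (i + 1) ≤ f i * (f t / f 0) ^ ((1 : ℝ) / t) := by
  by_contra h
  push_neg at h
  set c : ℝ := (f t / f 0) ^ ((1 : ℝ) / t) with hc
  have hc0 : 0 < c := Real.rpow_pos_of_pos (div_pos hpos h0) _
  have key : ∀ k, k ≤ t → f 0 * c ^ k ≤ f k := by
    intro k
    induction k with
    | zero => simp
    | succ n ih =>
      intro hn
      have h1 := ih (le_of_lt (Nat.lt_of_succ_le hn))
      have h2 := h n (Nat.lt_of_succ_le hn)
      have hlt : f 0 * c ^ (n + 1) < f (n + 1) :=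
        calc f 0 * c ^ (n + 1) = (f 0 * c ^ n) * c := by ring
          _ ≤ f n * c := mul_le_mul_of_nonneg_right h1 hc0.le
          _ < f (n + 1) := h2
      exact hlt.le
  obtain ⟨s, hs⟩ := Nat.exists_eq_succ_of_ne_zero ht.ne'
  have hct : c ^ t = f t / f 0 := by
    rw [hc, ← Real.rpow_natCast ((f t / f 0) ^ ((1 : ℝ) / t)) t,
      ← Real.rpow_mul (div_pos hpos h0).le]
    rw [one_div, inv_mul_cancel₀ (by exact_mod_cast ht.ne' : (t : ℝ) ≠ 0), Real.rpow_one]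
  have hstrict : f 0 * c ^ t < f t := by
    subst hs
    calc f 0 * c ^ (s + 1) = (f 0 * c ^ s) * c := by ring
      _ ≤ f s * c := mul_le_mul_of_nonneg_right (key s (Nat.le_succ s)) hc0.le
      _ < f (s + 1) := h s (Nat.lt_succ_self s)
  rw [hct, mul_comm, div_mul_cancel₀ _ h0.ne'] at hstrict
  exact lt_irrefl _ hstrict

/-- the Metric Ramsey Decomposition Lemma. -/
theorem stmt_1 {X : Type*} [MetricSpace X] [Fintype X] [Nonempty X]
    (w : X → ℝ) (hw : ∀ x, 0 < w x)
    (Δ : ℝ) (hΔ : 0 < Δ) (hΔ2 : Δ ≤ Metric.diam (Set.univ : Set X) / 2)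
    (t : ℕ) (ht : 2 ≤ t) :
    ∃ (Q P : Finset X) (hQ : Q.Nonempty), P ⊆ Q ∧
      Metric.diam (Q : Set X) ≤ Δ ∧
      (∀ p ∈ P, ∀ q ∉ Q, Δ / (4 * t) ≤ dist p q) ∧
      (∑ x ∈ P, w x) ≥ (∑ x ∈ Q, w x) *
        (sphWeight w Finset.univ Finset.univ_nonempty / sphWeight w Q hQ) ^ (-(1 : ℝ) / t) := by
  have htpos : 0 < t := lt_of_lt_of_le (by norm_num) ht
  have htR : (0 : ℝ) < t := by exact_mod_cast htpos
  -- choose a center maximizing the weight of the Δ/4 ball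
  obtain ⟨z, -, hzmax⟩ :=
    Finset.exists_max_image Finset.univ (fun v => ballWeight w v (Δ / 4)) Finset.univ_nonempty
  -- radii
  set r : ℕ → ℝ := fun i => Δ / 4 + i * (Δ / (4 * t)) with hr
  have hrmono : ∀ {i j : ℕ}, i ≤ j → r i ≤ r j := by
    intro i j hij
    have : (i : ℝ) ≤ j := by exact_mod_cast hij
    have hq : 0 ≤ Δ / (4 * t) := by positivity
    simp only [hr]
    nlinarith
  have hrpos : ∀ i, 0 < r i := by
    intro i
    have : 0 ≤ (i : ℝ) * (Δ / (4 * t)) := by positivity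
    simp only [hr]; linarith
  have hr0 : r 0 = Δ / 4 := by simp [hr]
  have hrt : r t = Δ / 2 := by
    simp only [hr]
    field_simp
    ring
  set f : ℕ → ℝ := fun i => ballWeight w z (r i) with hf
  have hfpos : ∀ i, 0 < f i := fun i => ballWeight_pos w hw z (hrpos i).le
  obtain ⟨i, hit, hikey⟩ := exists_good_index f t htpos (hfpos 0) (hfpos t)
  -- the sets
  set Q : Finset X := Finset.univ.filter (fun u => dist u z ≤ r (i + 1)) with hQdef
  set P : Finset X := Finset.univ.filter (fun u => dist u z ≤ r i) with hPdef
  have hzQ : z ∈ Q := by simp [hQdef, dist_self, (hrpos (i + 1)).le]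
  have hQne : Q.Nonempty := ⟨z, hzQ⟩
  have hPQ : P ⊆ Q := by
    intro u hu
    simp only [hPdef, hQdef, mem_filter, mem_univ, true_and] at *
    exact hu.trans (hrmono (Nat.le_succ i))
  have hri1 : r (i + 1) ≤ Δ / 2 := hrt ▸ hrmono (Nat.succ_le_of_lt hit)
  have hdiam : Metric.diam (Q : Set X) ≤ Δ := by
    apply Metric.diam_le_of_forall_dist_le hΔ.le
    intro x hx y hy
    simp only [hQdef, Finset.coe_filter, Set.mem_setOf_eq, mem_univ, true_and] at hx hy
    calc dist x y ≤ dist x z + dist z y := dist_triangle x z y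
      _ = dist x z + dist y z := by rw [dist_comm z y]
      _ ≤ Δ / 2 + Δ / 2 := add_le_add (hx.trans hri1) (hy.trans hri1)
      _ = Δ := by ring
  refine ⟨Q, P, hQne, hPQ, hdiam, ?_, ?_⟩
  · -- separation
    intro p hp q hq
    simp only [hPdef, mem_filter, mem_univ, true_and] at hp
    simp only [hQdef, mem_filter, mem_univ, true_and, not_le] at hq
    have hstep : r (i + 1) = r i + Δ / (4 * t) := by
      simp only [hr]; push_cast; ring
    have htri : dist q z ≤ dist q p + dist p z := dist_triangle q p z
    rw [hstep] at hq
    rw [dist_comm p q]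
    clear_value r f Q P
    linarith [htri, hp, hq]
  · -- weight inequality
    have hsumQ : ∑ x ∈ Q, w x = f (i + 1) := rfl
    have hsumP : ∑ x ∈ P, w x = f i := rfl
    rw [hsumQ, hsumP, ge_iff_le]
    set βX : ℝ := sphWeight w Finset.univ Finset.univ_nonempty with hβX
    set βQ : ℝ := sphWeight w Q hQne with hβQ
    have hf0 : f 0 = ballWeight w z (Δ / 4) := by
      rw [show f 0 = ballWeight w z (r 0) from rfl, hr0]
    have hft : f t = ballWeight w z (Δ / 2) := by
      rw [show f t = ballWeight w z (r t) from rfl, hrt]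
    have hβQ' : βQ = Q.sup' hQne (fun q => ballWeight w q (Metric.diam (Q : Set X) / 4)) := rfl
    have hβX' : βX = Finset.univ.sup'
        Finset.univ_nonempty (fun v => ballWeight w v (Metric.diam (Set.univ : Set X) / 4)) := by
      rw [hβX, sphWeight]
      simp only [Finset.coe_univ]
    -- βQ ≤ f 0
    have hdiamQ4 : Metric.diam (Q : Set X) / 4 ≤ Δ / 4 := by linarith
    have hβQle : βQ ≤ f 0 := by
      rw [hβQ']
      apply Finset.sup'_le
      intro q hq
      calc ballWeight w q (Metric.diam (Q : Set X) / 4)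
          ≤ ballWeight w q (Δ / 4) := ballWeight_mono w (fun x => (hw x).le) q hdiamQ4
        _ ≤ ballWeight w z (Δ / 4) := hzmax q (mem_univ q)
        _ = f 0 := hf0.symm
    have hβQpos : 0 < βQ := by
      have h1 : ballWeight w z (Metric.diam (Q : Set X) / 4) ≤ βQ := by
        rw [hβQ']
        exact Finset.le_sup' (fun q => ballWeight w q (Metric.diam (Q : Set X) / 4)) hzQ
      exact lt_of_lt_of_le (ballWeight_pos w hw z (by positivity)) h1
    -- f t ≤ βX
    have hftβX : f t ≤ βX := by
      have h1 : Δ / 2 ≤ Metric.diam (Set.univ : Set X) / 4 := by linarith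
      rw [hft, hβX']
      calc ballWeight w z (Δ / 2)
          ≤ ballWeight w z (Metric.diam (Set.univ : Set X) / 4) :=
            ballWeight_mono w (fun x => (hw x).le) z h1
        _ ≤ _ := Finset.le_sup'
            (fun v => ballWeight w v (Metric.diam (Set.univ : Set X) / 4)) (mem_univ z)
    have hratio : f t / f 0 ≤ βX / βQ :=
      div_le_div₀ (le_trans (hfpos t).le hftβX) hftβX hβQpos hβQle
    have hexp : (-(1 : ℝ) / t) ≤ 0 := by
      apply div_nonpos_of_nonpos_of_nonneg <;> simp [htR.le]
    have hstep1 : (βX / βQ) ^ (-(1 : ℝ) / t) ≤ (f t / f 0) ^ (-(1 : ℝ) / t) :=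
      Real.rpow_le_rpow_of_nonpos (div_pos (hfpos t) (hfpos 0)) hratio hexp
    have hstep2 : f (i + 1) * (f t / f 0) ^ (-(1 : ℝ) / t) ≤ f i := by
      have hcinv : (f t / f 0) ^ (-(1 : ℝ) / t) =
          ((f t / f 0) ^ ((1 : ℝ) / t))⁻¹ := by
        rw [neg_div, Real.rpow_neg (div_pos (hfpos t) (hfpos 0)).le]
      rw [hcinv]
      have hcpos : 0 < (f t / f 0) ^ ((1 : ℝ) / t) :=
        Real.rpow_pos_of_pos (div_pos (hfpos t) (hfpos 0)) _
      rw [mul_inv_le_iff₀ hcpos]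
      linarith [hikey]
    calc f (i + 1) * (βX / βQ) ^ (-(1 : ℝ) / t)
        ≤ f (i + 1) * (f t / f 0) ^ (-(1 : ℝ) / t) :=
          mul_le_mul_of_nonneg_left hstep1 (hfpos (i + 1)).le
      _ ≤ f i := hstep2
end

section
/- For every ε > 0, every n-point metric space X admits a non-contractive Ramsey embedding f: X → U into an ultrametric U with a core subspace X' ⊆ X of size at least n^{1-ε}, such that for every x ∈ X' and every y ∈ X, d_U(f(x),f(y)) ≤ O(1/ε)·d(x,y). -/
open Finset

/-- A distance function is an ultrametric. -/
def IsUltrametric {U : Type*} (ρ : U → U → ℝ) : Prop :=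
  (∀ x y, 0 ≤ ρ x y) ∧ (∀ x y, ρ x y = 0 ↔ x = y) ∧ (∀ x y, ρ x y = ρ y x) ∧
    (∀ x y z, ρ x z ≤ max (ρ x y) (ρ y z))

namespace Stmt10

variable {X : Type} [Fintype X] [DecidableEq X]

noncomputable def pri (π : X ≃ X) (x : X) : Fin (Fintype.card X) := (Fintype.equivFin X) (π x)

lemma pri_injective (π : X ≃ X) : Function.Injective (pri π) := fun a b h =>
  π.injective ((Fintype.equivFin X).injective h)

noncomputable def minOf (π : X ≃ X) (T : Finset X) (d : X) : X :=
  if h : T.Nonempty then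
    π.symm ((Fintype.equivFin X).symm ((T.image (pri π)).min' (h.image _)))
  else d

lemma pri_minOf {T : Finset X} (π : X ≃ X) (h : T.Nonempty) (d : X) :
    pri π (minOf π T d) = (T.image (pri π)).min' (h.image _) := by
  simp [minOf, h, pri]

lemma minOf_mem {T : Finset X} (π : X ≃ X) (h : T.Nonempty) (d : X) :
    minOf π T d ∈ T := by
  have hm := (T.image (pri π)).min'_mem (h.image _)
  rw [mem_image] at hm
  obtain ⟨c, hc, hcm⟩ := hm
  have : minOf π T d = c := pri_injective π (by rw [pri_minOf π h d, hcm])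
  rwa [this]

lemma minOf_le {T : Finset X} (π : X ≃ X) (h : T.Nonempty) (d : X) {c : X} (hc : c ∈ T) :
    pri π (minOf π T d) ≤ pri π c := by
  rw [pri_minOf π h d]
  exact min'_le _ _ (mem_image_of_mem _ hc)

lemma minOf_eq_of {T : Finset X} (π : X ≃ X) (h : T.Nonempty) (d : X) {w : X} (hw : w ∈ T)
    (hmin : ∀ c ∈ T, pri π w ≤ pri π c) : minOf π T d = w :=
  pri_injective π (le_antisymm (minOf_le π h d hw) (hmin _ (minOf_mem π h d)))

lemma minOf_swap {T : Finset X} (π : X ≃ X) (d : X) {a b : X} (ha : a ∈ T) (hb : b ∈ T)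
    (hm : minOf π T d = a) : minOf ((Equiv.swap a b).trans π) T d = b := by
  have hT : T.Nonempty := ⟨a, ha⟩
  have hmin : ∀ c ∈ T, pri π a ≤ pri π c := by
    intro c hc; rw [← hm]; exact minOf_le π hT d hc
  apply minOf_eq_of _ hT d hb
  intro c hc
  have h1 : pri ((Equiv.swap a b).trans π) b = pri π a := by
    simp [pri, Equiv.trans_apply, Equiv.swap_apply_right]
  have h2 : pri ((Equiv.swap a b).trans π) c = pri π ((Equiv.swap a b) c) := by
    simp [pri, Equiv.trans_apply]
  have h3 : (Equiv.swap a b) c ∈ T := by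
    rcases eq_or_ne c a with rfl | hca
    · rwa [Equiv.swap_apply_left]
    rcases eq_or_ne c b with rfl | hcb
    · rwa [Equiv.swap_apply_right]
    · rwa [Equiv.swap_apply_of_ne_of_ne hca hcb]
  rw [h1, h2]
  exact hmin _ h3

lemma count_min (S T : Finset X) (hST : S ⊆ T) (hT : T.Nonempty) (d : X) :
    (univ.filter fun π : X ≃ X => minOf π T d ∈ S).card * T.card
      = S.card * Fintype.card (X ≃ X) := by
  classical
  obtain ⟨a₀, ha₀⟩ := hT
  have fib : ∀ a ∈ T, ∀ b ∈ T,
      (univ.filter fun π : X ≃ X => minOf π T d = a).card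
        = (univ.filter fun π : X ≃ X => minOf π T d = b).card := by
    intro a ha b hb
    apply Finset.card_bij' (fun π _ => (Equiv.swap a b).trans π)
      (fun π _ => (Equiv.swap a b).trans π)
    · intro π hπ
      rw [mem_filter] at hπ ⊢
      exact ⟨mem_univ _, minOf_swap π d ha hb hπ.2⟩
    · intro π hπ
      rw [mem_filter] at hπ ⊢
      refine ⟨mem_univ _, ?_⟩
      have := minOf_swap π d hb ha hπ.2
      rwa [Equiv.swap_comm] at this
    · intro π _
      ext x
      simp [Equiv.trans_apply, Equiv.swap_apply_self]
    · intro π _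
      ext x
      simp [Equiv.trans_apply, Equiv.swap_apply_self]
  have total : Fintype.card (X ≃ X)
      = ∑ a ∈ T, (univ.filter fun π : X ≃ X => minOf π T d = a).card := by
    rw [← Finset.card_univ]
    exact card_eq_sum_card_fiberwise (fun π _ => minOf_mem π ⟨a₀, ha₀⟩ d)
  have total' : Fintype.card (X ≃ X)
      = T.card * (univ.filter fun π : X ≃ X => minOf π T d = a₀).card := by
    rw [total, Finset.sum_congr rfl (fun a ha => fib a ha a₀ ha₀), Finset.sum_const,
      smul_eq_mul]
  have hSsum : (univ.filter fun π : X ≃ X => minOf π T d ∈ S).card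
      = ∑ a ∈ S, ((univ.filter fun π : X ≃ X => minOf π T d ∈ S).filter
          fun π => minOf π T d = a).card :=
    card_eq_sum_card_fiberwise (fun π hπ => (mem_filter.mp hπ).2)
  have hfib' : ∀ a ∈ S, ((univ.filter fun π : X ≃ X => minOf π T d ∈ S).filter
      fun π => minOf π T d = a).card
        = (univ.filter fun π : X ≃ X => minOf π T d = a₀).card := by
    intro a ha
    rw [Finset.filter_filter]
    have : (univ.filter fun π : X ≃ X => minOf π T d ∈ S ∧ minOf π T d = a)
        = univ.filter fun π : X ≃ X => minOf π T d = a := by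
      apply Finset.filter_congr
      intro π _
      constructor
      · exact fun h => h.2
      · exact fun h => ⟨h ▸ ha, h⟩
    rw [this]
    exact fib a (hST ha) a₀ ha₀
  rw [hSsum, Finset.sum_congr rfl hfib', Finset.sum_const, smul_eq_mul, total']
  ring

end Stmt10

namespace Stmt10

section Metric

variable {X : Type} [Fintype X] [MetricSpace X]

open scoped Classical

noncomputable def mball (x : X) (r : ℝ) : Finset X := univ.filter (fun y => dist y x ≤ r)

lemma mem_mball {x y : X} {r : ℝ} : y ∈ mball x r ↔ dist y x ≤ r := by
  simp [mball]

lemma self_mem_mball {x : X} {r : ℝ} (hr : 0 ≤ r) : x ∈ mball x r := by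
  simp [mball, hr]

lemma mball_nonempty {x : X} {r : ℝ} (hr : 0 ≤ r) : (mball x r).Nonempty :=
  ⟨x, self_mem_mball hr⟩

lemma mball_mono {x : X} {r r' : ℝ} (h : r ≤ r') : mball x r ⊆ mball x r' := by
  intro y hy
  rw [mem_mball] at hy ⊢
  linarith

lemma mball_card_pos {x : X} {r : ℝ} (hr : 0 ≤ r) : 0 < (mball x r).card :=
  Finset.card_pos.mpr (mball_nonempty hr)

noncomputable def center (π : X ≃ X) (r : ℝ) (y : X) : X := minOf π (mball y r) y

lemma center_dist {π : X ≃ X} {r : ℝ} (hr : 0 ≤ r) (y : X) : dist (center π r y) y ≤ r :=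
  mem_mball.mp (minOf_mem π (mball_nonempty hr) y)

/-- The padding transfer lemma: if the minimal-priority point of the ball of radius `r+a`
around `x` is within `r-a` of `x`, then all points within `a` of `x` get the same center
at radius `r`. -/
lemma pad_transfer (π : X ≃ X) {r a : ℝ} (ha : 0 ≤ a) (har : a ≤ r) (x : X)
    (hev : dist (center π (r + a) x) x ≤ r - a) :
    ∀ z, dist z x ≤ a → center π r z = center π r x := by
  have ha' : (0:ℝ) ≤ r + a := by linarith
  set w := center π (r + a) x with hw
  have key : ∀ z, dist z x ≤ a → center π r z = w := by
    intro z hz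
    apply minOf_eq_of _ (mball_nonempty (by linarith)) _
    · rw [mem_mball]
      calc dist w z ≤ dist w x + dist x z := dist_triangle _ _ _
        _ ≤ (r - a) + a := by
            rw [dist_comm x z]; exact add_le_add hev hz
        _ = r := by ring
    · intro c hc
      rw [mem_mball] at hc
      have hcx : c ∈ mball x (r + a) := by
        rw [mem_mball]
        calc dist c x ≤ dist c z + dist z x := dist_triangle _ _ _
          _ ≤ r + a := add_le_add hc hz
      exact minOf_le π (mball_nonempty ha') x hcx
  intro z hz
  rw [key z hz, key x (by simp [ha])]

/-- Counting the permutations realizing the padding event, for a fixed radius. -/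
lemma count_pad (x : X) {r a : ℝ} (ha : 0 ≤ a) (har : a ≤ r) :
    (univ.filter fun π : X ≃ X => dist (center π (r + a) x) x ≤ r - a).card
        * (mball x (r + a)).card
      = (mball x (r - a)).card * Fintype.card (X ≃ X) := by
  have h1 : (univ.filter fun π : X ≃ X => dist (center π (r + a) x) x ≤ r - a)
      = univ.filter fun π : X ≃ X => minOf π (mball x (r + a)) x ∈ mball x (r - a) := by
    apply Finset.filter_congr
    intro π _
    rw [mem_mball]
    rfl
  rw [h1]
  exact count_min _ _ (mball_mono (by linarith)) (mball_nonempty (by linarith)) x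

end Metric

end Stmt10

namespace Stmt10

section Main

open scoped Classical

variable {X : Type} [Fintype X] [MetricSpace X]

/-- radius used at scale `t` with random index `j`. -/
noncomputable def rad (Δ : ℝ) (J t j : ℕ) : ℝ := Δ/8^t/4 + (2*j+1) * (Δ/8^t/(8*J))

/-- padding width at scale `t`. -/
noncomputable def pa (Δ : ℝ) (J t : ℕ) : ℝ := Δ/8^t/(8*J)

noncomputable def cN (Δ : ℝ) (J T : ℕ) (ω : Fin (T+1) → (X ≃ X) × Fin J) (t : ℕ) (y : X) : X :=
  if h : t < T+1 then center (ω ⟨t,h⟩).1 (rad Δ J t ((ω ⟨t,h⟩).2 : ℕ)) y else y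

noncomputable def sep (Δ : ℝ) (J T : ℕ) (ω : Fin (T+1) → (X ≃ X) × Fin J) (x y : X) : ℕ :=
  if h : ∃ t, cN Δ J T ω t x ≠ cN Δ J T ω t y then Nat.find h else 0

noncomputable def rho (Δ : ℝ) (J T : ℕ) (ω : Fin (T+1) → (X ≃ X) × Fin J) (x y : X) : ℝ :=
  if x = y then 0 else 8*Δ/8^(sep Δ J T ω x y)

def padEvt (Δ : ℝ) (J t : ℕ) (p : (X ≃ X) × Fin J) (x : X) : Prop :=
  dist (center p.1 (rad Δ J t (p.2:ℕ) + pa Δ J t) x) x ≤ rad Δ J t (p.2:ℕ) - pa Δ J t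

def Pad (Δ : ℝ) (J T : ℕ) (ω : Fin (T+1) → (X ≃ X) × Fin J) (x : X) : Prop :=
  ∀ t : Fin (T+1), padEvt Δ J (t:ℕ) (ω t) x

variable {Δ : ℝ} {J T : ℕ}

lemma pa_pos (hΔ : 0 < Δ) (hJ : 1 ≤ J) (t : ℕ) : 0 < pa Δ J t := by
  have : (0:ℝ) < J := by exact_mod_cast hJ
  have h8 : (0:ℝ) < 8^t := by positivity
  unfold pa; positivity

lemma rad_sub_pa (t j : ℕ) : rad Δ J t j - pa Δ J t = Δ/8^t/4 + 2*j*(Δ/8^t/(8*J)) := by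
  unfold rad pa; ring

lemma rad_add_pa (t j : ℕ) : rad Δ J t j + pa Δ J t = Δ/8^t/4 + 2*(j+1)*(Δ/8^t/(8*J)) := by
  unfold rad pa; ring

lemma pa_le_rad (hΔ : 0 < Δ) (hJ : 1 ≤ J) (t j : ℕ) : pa Δ J t ≤ rad Δ J t j := by
  have h1 : (0:ℝ) ≤ Δ/8^t/4 := by positivity
  have h2 : (0:ℝ) ≤ 2*j*(Δ/8^t/(8*J)) := by positivity
  nlinarith [rad_sub_pa (Δ := Δ) (J := J) t j]

lemma rad_add_pa_le (hΔ : 0 < Δ) (hJ : 1 ≤ J) (t : ℕ) {j : ℕ} (hj : j < J) :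
    rad Δ J t j + pa Δ J t ≤ Δ/8^t/2 := by
  rw [rad_add_pa]
  have hJ' : (0:ℝ) < J := by exact_mod_cast Nat.lt_of_lt_of_le Nat.zero_lt_one hJ
  have hj' : ((j:ℝ)+1) ≤ J := by exact_mod_cast hj
  have h8 : (0:ℝ) < 8^t := by positivity
  have key : 2*((j:ℝ)+1)*(Δ/8^t/(8*J)) ≤ Δ/8^t/4 := by
    have h1 : ((j:ℝ)+1)/J ≤ 1 := by rw [div_le_one hJ']; exact hj'
    calc 2*((j:ℝ)+1)*(Δ/8^t/(8*J)) = (((j:ℝ)+1)/J) * (Δ/8^t/4) := by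
          field_simp; ring
      _ ≤ 1 * (Δ/8^t/4) := mul_le_mul_of_nonneg_right h1 (by positivity)
      _ = Δ/8^t/4 := one_mul _
  linarith

lemma rad_le (hΔ : 0 < Δ) (hJ : 1 ≤ J) (t : ℕ) {j : ℕ} (hj : j < J) :
    rad Δ J t j ≤ Δ/8^t/2 := by
  have := rad_add_pa_le hΔ hJ t hj
  have := pa_pos hΔ hJ t
  linarith

lemma rad_pos (hΔ : 0 < Δ) (hJ : 1 ≤ J) (t j : ℕ) : 0 < rad Δ J t j :=
  lt_of_lt_of_le (pa_pos hΔ hJ t) (pa_le_rad hΔ hJ t j)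

lemma dist_le_of_cN_eq (hΔ : 0 < Δ) (hJ : 1 ≤ J)
    {ω : Fin (T+1) → (X ≃ X) × Fin J} {t : ℕ} (ht : t < T+1) {x y : X}
    (h : cN Δ J T ω t x = cN Δ J T ω t y) : dist x y ≤ Δ/8^t := by
  simp only [cN, dif_pos ht] at h
  set π := (ω ⟨t,ht⟩).1
  set j := ((ω ⟨t,ht⟩).2 : ℕ)
  have hjJ : j < J := (ω ⟨t,ht⟩).2.isLt
  have hr : (0:ℝ) ≤ rad Δ J t j := le_of_lt (rad_pos hΔ hJ t j)
  have h1 : dist (center π (rad Δ J t j) x) x ≤ rad Δ J t j := center_dist hr x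
  have h2 : dist (center π (rad Δ J t j) y) y ≤ rad Δ J t j := center_dist hr y
  have hle := rad_le hΔ hJ t hjJ
  have e1 : dist x (center π (rad Δ J t j) x) ≤ rad Δ J t j := by
    rw [dist_comm]; exact h1
  have e2 : dist (center π (rad Δ J t j) x) y ≤ rad Δ J t j := by
    rw [h]; exact h2
  have e3 := dist_triangle x (center π (rad Δ J t j) x) y
  have : dist x y ≤ Δ/8^t/2 + Δ/8^t/2 := by linarith
  linarith

end Main

end Stmt10

namespace Stmt10

section Main2

open scoped Classical

variable {X : Type} [Fintype X] [MetricSpace X] {Δ : ℝ} {J T : ℕ}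
variable {ω : Fin (T+1) → (X ≃ X) × Fin J}

lemma sep_exists (hΔ : 0 < Δ) (hJ : 1 ≤ J) (hT : ∀ x y : X, x ≠ y → Δ/8^T < dist x y)
    {x y : X} (hxy : x ≠ y) : ∃ t, cN Δ J T ω t x ≠ cN Δ J T ω t y := by
  refine ⟨T, fun h => ?_⟩
  have h1 := dist_le_of_cN_eq hΔ hJ (Nat.lt_succ_self T) h
  have h2 := hT x y hxy
  linarith

lemma sep_min {x y : X} {t : ℕ} (ht : t < sep Δ J T ω x y) :
    cN Δ J T ω t x = cN Δ J T ω t y := by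
  unfold sep at ht
  split_ifs at ht with h
  · exact not_not.mp (Nat.find_min h ht)
  · omega

lemma sep_spec {x y : X} (hex : ∃ t, cN Δ J T ω t x ≠ cN Δ J T ω t y) :
    cN Δ J T ω (sep Δ J T ω x y) x ≠ cN Δ J T ω (sep Δ J T ω x y) y := by
  unfold sep; rw [dif_pos hex]; exact Nat.find_spec hex

lemma sep_le {x y : X} (hex : ∃ t, cN Δ J T ω t x ≠ cN Δ J T ω t y) {m : ℕ}
    (hm : cN Δ J T ω m x ≠ cN Δ J T ω m y) : sep Δ J T ω x y ≤ m := by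
  unfold sep; rw [dif_pos hex]; exact Nat.find_min' hex hm

lemma sep_symm (x y : X) : sep Δ J T ω x y = sep Δ J T ω y x := by
  unfold sep
  by_cases h1 : ∃ t, cN Δ J T ω t x ≠ cN Δ J T ω t y
  · have h2 : ∃ t, cN Δ J T ω t y ≠ cN Δ J T ω t x := ⟨h1.choose, Ne.symm h1.choose_spec⟩
    rw [dif_pos h1, dif_pos h2]
    exact le_antisymm (Nat.find_min' h1 (Ne.symm (Nat.find_spec h2)))
      (Nat.find_min' h2 (Ne.symm (Nat.find_spec h1)))
  · have h2 : ¬ ∃ t, cN Δ J T ω t y ≠ cN Δ J T ω t x := fun ⟨t, ht⟩ => h1 ⟨t, Ne.symm ht⟩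
    rw [dif_neg h1, dif_neg h2]

lemma rho_anti (hΔ : 0 < Δ) : Antitone (fun s : ℕ => 8*Δ/8^s) := by
  intro a b h
  have h8 : (8:ℝ)^a ≤ 8^b := by
    apply pow_le_pow_right₀ (by norm_num) h
  have ha : (0:ℝ) < 8^a := by positivity
  have hb : (0:ℝ) < 8^b := by positivity
  rw [div_le_div_iff₀ hb ha]
  nlinarith

lemma rho_ultra (hΔ : 0 < Δ) (hJ : 1 ≤ J) (hT : ∀ x y : X, x ≠ y → Δ/8^T < dist x y) :
    IsUltrametric (rho Δ J T ω) := by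
  have fpos : ∀ s : ℕ, (0:ℝ) < 8*Δ/8^s := by intro s; positivity
  have rnonneg : ∀ x y : X, 0 ≤ rho Δ J T ω x y := by
    intro x y; unfold rho; split_ifs
    · exact le_refl 0
    · exact le_of_lt (fpos _)
  refine ⟨rnonneg, ?_, ?_, ?_⟩
  · intro x y
    unfold rho
    split_ifs with h
    · simp [h]
    · simp only [h, iff_false]
      exact ne_of_gt (fpos _)
  · intro x y
    unfold rho
    by_cases h : x = y
    · rw [if_pos h, if_pos h.symm]
    · rw [if_neg h, if_neg (fun e => h e.symm), sep_symm]
  · intro x y z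
    by_cases hxz : x = z
    · rw [rho, if_pos hxz]
      exact le_max_of_le_left (rnonneg x y)
    by_cases hxy : x = y
    · rw [show rho Δ J T ω x z = rho Δ J T ω y z by rw [hxy]]
      exact le_max_right _ _
    by_cases hyz : y = z
    · rw [show rho Δ J T ω x z = rho Δ J T ω x y by rw [hyz]]
      exact le_max_left _ _
    have hex : ∃ t, cN Δ J T ω t x ≠ cN Δ J T ω t z := sep_exists hΔ hJ hT hxz
    have hmin : min (sep Δ J T ω x y) (sep Δ J T ω y z) ≤ sep Δ J T ω x z := by
      by_contra hc
      push_neg at hc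
      have h1 : cN Δ J T ω (sep Δ J T ω x z) x = cN Δ J T ω (sep Δ J T ω x z) y :=
        sep_min (lt_of_lt_of_le hc (min_le_left _ _))
      have h2 : cN Δ J T ω (sep Δ J T ω x z) y = cN Δ J T ω (sep Δ J T ω x z) z :=
        sep_min (lt_of_lt_of_le hc (min_le_right _ _))
      exact sep_spec hex (h1.trans h2)
    rw [rho, if_neg hxz, rho, if_neg hxy, rho, if_neg hyz]
    calc 8*Δ/8^(sep Δ J T ω x z) ≤ 8*Δ/8^(min (sep Δ J T ω x y) (sep Δ J T ω y z)) :=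
          rho_anti hΔ hmin
      _ = max (8*Δ/8^(sep Δ J T ω x y)) (8*Δ/8^(sep Δ J T ω y z)) :=
          (rho_anti hΔ).map_min

lemma rho_noncontract (hΔ : 0 < Δ) (hJ : 1 ≤ J) (hT : ∀ x y : X, x ≠ y → Δ/8^T < dist x y)
    (hdiam : ∀ x y : X, dist x y ≤ Δ) (x y : X) : dist x y ≤ rho Δ J T ω x y := by
  by_cases hxy : x = y
  · rw [rho, if_pos hxy, hxy, dist_self]
  rw [rho, if_neg hxy]
  rcases Nat.eq_zero_or_pos (sep Δ J T ω x y) with h0 | hpos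
  · rw [h0]
    have := hdiam x y
    have : (8:ℝ)^(0:ℕ) = 1 := by norm_num
    simp only [pow_zero]
    linarith [hdiam x y, hΔ]
  · obtain ⟨k, hk⟩ : ∃ k, sep Δ J T ω x y = k + 1 := ⟨sep Δ J T ω x y - 1, by omega⟩
    have hsT : sep Δ J T ω x y ≤ T := sep_le (sep_exists hΔ hJ hT hxy)
      (fun h => absurd (dist_le_of_cN_eq hΔ hJ (Nat.lt_succ_self T) h)
        (not_le.mpr (hT x y hxy)))
    have hkT : k < T + 1 := by omega
    have heq : cN Δ J T ω k x = cN Δ J T ω k y := sep_min (by omega)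
    have hd := dist_le_of_cN_eq hΔ hJ hkT heq
    rw [hk]
    have : Δ/8^k = 8*Δ/8^(k+1) := by
      rw [pow_succ]
      field_simp
    linarith [hd, this ▸ hd]

lemma rho_pad_le (hΔ : 0 < Δ) (hJ : 1 ≤ J) (hT : ∀ x y : X, x ≠ y → Δ/8^T < dist x y)
    {x : X} (hx : Pad Δ J T ω x) (y : X) :
    rho Δ J T ω x y ≤ 64*J*dist x y := by
  by_cases hxy : x = y
  · rw [rho, if_pos hxy, hxy, dist_self, mul_zero]
  rw [rho, if_neg hxy]
  set s := sep Δ J T ω x y with hs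
  have hex : ∃ t, cN Δ J T ω t x ≠ cN Δ J T ω t y := sep_exists hΔ hJ hT hxy
  have hsT : s ≤ T := sep_le hex
    (fun h => absurd (dist_le_of_cN_eq hΔ hJ (Nat.lt_succ_self T) h)
      (not_le.mpr (hT x y hxy)))
  have hsT' : s < T + 1 := by omega
  have pad := hx ⟨s, hsT'⟩
  have pad' : padEvt Δ J s (ω ⟨s, hsT'⟩) x := pad
  set p := ω ⟨s, hsT'⟩ with hp
  have trans := pad_transfer p.1 (le_of_lt (pa_pos hΔ hJ s)) (pa_le_rad hΔ hJ s (p.2:ℕ)) x pad'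
  have hdy : ¬ dist y x ≤ pa Δ J s := by
    intro hle
    have hcy : cN Δ J T ω s y = cN Δ J T ω s x := by
      simp only [cN, dif_pos hsT']
      exact trans y hle
    exact sep_spec hex hcy.symm
  push_neg at hdy
  have hJ0 : (J:ℝ) ≠ 0 := by
    have : (0:ℕ) < J := hJ
    exact_mod_cast Nat.pos_iff_ne_zero.mp this
  have heq : 8*Δ/8^s = 64*(J:ℝ)*pa Δ J s := by
    unfold pa
    field_simp
    ring
  rw [heq, dist_comm x y]
  have h64 : (0:ℝ) ≤ 64*(J:ℝ) := by positivity
  exact mul_le_mul_of_nonneg_left (le_of_lt hdy) h64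

end Main2

end Stmt10

namespace Stmt10

section Count

open scoped Classical

variable {X : Type} [Fintype X] [MetricSpace X] {Δ : ℝ} {J T : ℕ}

lemma count_evt_j (hΔ : 0 < Δ) (hJ : 1 ≤ J) (x : X) (t : ℕ) (j : Fin J) :
    ((univ.filter fun π : X ≃ X => padEvt Δ J t (π, j) x).card : ℝ)
      = (Fintype.card (X ≃ X) : ℝ) * (((mball x (rad Δ J t (j:ℕ) - pa Δ J t)).card : ℝ)
        / ((mball x (rad Δ J t (j:ℕ) + pa Δ J t)).card : ℝ)) := by
  have hpa : (0:ℝ) ≤ pa Δ J t := le_of_lt (pa_pos hΔ hJ t)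
  have hparad : pa Δ J t ≤ rad Δ J t (j:ℕ) := pa_le_rad hΔ hJ t (j:ℕ)
  have hc := count_pad x hpa hparad
  have hbigpos : (0:ℝ) < ((mball x (rad Δ J t (j:ℕ) + pa Δ J t)).card : ℝ) := by
    have h := mball_card_pos (x := x) (r := rad Δ J t (j:ℕ) + pa Δ J t) (by linarith)
    exact_mod_cast h
  have hcast : ((univ.filter fun π : X ≃ X =>
        dist (center π (rad Δ J t (j:ℕ) + pa Δ J t) x) x ≤ rad Δ J t (j:ℕ) - pa Δ J t).card : ℝ)
        * ((mball x (rad Δ J t (j:ℕ) + pa Δ J t)).card : ℝ)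
      = ((mball x (rad Δ J t (j:ℕ) - pa Δ J t)).card : ℝ) * (Fintype.card (X ≃ X) : ℝ) := by
    exact_mod_cast hc
  have hev : (univ.filter fun π : X ≃ X => padEvt Δ J t (π, j) x)
      = univ.filter fun π : X ≃ X =>
        dist (center π (rad Δ J t (j:ℕ) + pa Δ J t) x) x ≤ rad Δ J t (j:ℕ) - pa Δ J t := rfl
  rw [hev]
  field_simp at hcast ⊢
  linarith [hcast]

lemma count_evt (hΔ : 0 < Δ) (hJ : 1 ≤ J) (x : X) (t : ℕ) :
    ((univ.filter fun p : (X ≃ X) × Fin J => padEvt Δ J t p x).card : ℝ)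
      = (Fintype.card (X ≃ X) : ℝ) * ∑ j : Fin J,
          (((mball x (rad Δ J t (j:ℕ) - pa Δ J t)).card : ℝ)
            / ((mball x (rad Δ J t (j:ℕ) + pa Δ J t)).card : ℝ)) := by
  have hfib : (univ.filter fun p : (X ≃ X) × Fin J => padEvt Δ J t p x).card
      = ∑ j : Fin J, ((univ.filter fun p : (X ≃ X) × Fin J => padEvt Δ J t p x).filter
          fun p => p.2 = j).card :=
    card_eq_sum_card_fiberwise (fun p _ => mem_univ _)
  have hfj : ∀ j : Fin J, ((univ.filter fun p : (X ≃ X) × Fin J => padEvt Δ J t p x).filter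
      fun p => p.2 = j).card = (univ.filter fun π : X ≃ X => padEvt Δ J t (π, j) x).card := by
    intro j
    apply Finset.card_bij (fun p _ => p.1)
    · intro p hp
      simp only [mem_filter, mem_univ, true_and] at hp ⊢
      obtain ⟨h1, h2⟩ := hp
      have : p = (p.1, j) := by rw [← h2]
      rwa [← this]
    · intro p hp q hq hpq
      simp only [mem_filter] at hp hq
      exact Prod.ext hpq (hp.2.trans hq.2.symm)
    · intro π hπ
      simp only [mem_filter, mem_univ, true_and] at hπ
      exact ⟨(π, j), by simp [hπ], rfl⟩
  rw [hfib]
  push_cast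
  rw [Finset.sum_congr rfl (fun j _ => by exact_mod_cast congrArg Nat.cast (hfj j))]
  rw [Finset.sum_congr rfl (fun j _ => count_evt_j hΔ hJ x t j), ← Finset.mul_sum]

lemma telescope_div (g : ℕ → ℝ) (hg : ∀ i, g i ≠ 0) :
    ∀ n, ∏ i ∈ Finset.range n, (g i / g (i+1)) = g 0 / g n := by
  intro n
  induction n with
  | zero => simp [div_self (hg 0)]
  | succ m ih =>
      rw [Finset.prod_range_succ, ih, div_mul_div_comm]
      rw [mul_comm (g 0) (g m), mul_div_mul_left _ _ (hg m)]

end Count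

end Stmt10

namespace Stmt10

section Count2

open scoped Classical

variable {X : Type} [Fintype X] [MetricSpace X] {Δ : ℝ} {J T : ℕ}

lemma scale_bound (hΔ : 0 < Δ) (hJ : 1 ≤ J) (x : X) (t : ℕ) :
    (Fintype.card (X ≃ X) : ℝ) * J *
        ((((mball x (Δ/8^t/4)).card : ℝ) / ((mball x (Δ/8^t/2)).card : ℝ)) ^ ((J:ℝ)⁻¹))
      ≤ ((univ.filter fun p : (X ≃ X) × Fin J => padEvt Δ J t p x).card : ℝ) := by
  have hJR : (0:ℝ) < (J:ℝ) := by exact_mod_cast Nat.lt_of_lt_of_le Nat.zero_lt_one hJ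
  have hJ0 : (J:ℝ) ≠ 0 := ne_of_gt hJR
  set g : ℕ → ℝ := fun j => ((mball x (Δ/8^t/4 + 2*j*(Δ/8^t/(8*(J:ℝ))))).card : ℝ) with hgdef
  have hrpos : ∀ j : ℕ, (0:ℝ) ≤ Δ/8^t/4 + 2*j*(Δ/8^t/(8*(J:ℝ))) := by
    intro j
    have h1 : (0:ℝ) ≤ Δ/8^t/4 := by positivity
    have h2 : (0:ℝ) ≤ 2*(j:ℝ)*(Δ/8^t/(8*(J:ℝ))) := by positivity
    linarith
  have hgpos : ∀ j : ℕ, (0:ℝ) < g j := by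
    intro j
    exact Nat.cast_pos.mpr (mball_card_pos (x := x) (hrpos j))
  have hq : ∀ j : Fin J,
      ((mball x (rad Δ J t (j:ℕ) - pa Δ J t)).card : ℝ)
          / ((mball x (rad Δ J t (j:ℕ) + pa Δ J t)).card : ℝ)
        = g (j:ℕ) / g ((j:ℕ)+1) := by
    intro j
    have e1 : rad Δ J t (j:ℕ) - pa Δ J t = Δ/8^t/4 + 2*((j:ℕ):ℝ)*(Δ/8^t/(8*(J:ℝ))) :=
      rad_sub_pa _ _
    have e2 : rad Δ J t (j:ℕ) + pa Δ J t
        = Δ/8^t/4 + 2*(((j:ℕ):ℝ)+1)*(Δ/8^t/(8*(J:ℝ))) := rad_add_pa _ _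
    have e3 : Δ/8^t/4 + 2*((((j:ℕ)+1:ℕ)):ℝ)*(Δ/8^t/(8*(J:ℝ)))
        = Δ/8^t/4 + 2*(((j:ℕ):ℝ)+1)*(Δ/8^t/(8*(J:ℝ))) := by push_cast; ring
    rw [e1, e2]
    simp only [hgdef, e3]
  have hsum : ∑ _j : Fin J, ((J:ℝ)⁻¹) = 1 := by
    rw [Finset.sum_const, Finset.card_univ, Fintype.card_fin, nsmul_eq_mul, mul_inv_cancel₀ hJ0]
  have amgm := Real.geom_mean_le_arith_mean_weighted univ (fun _ : Fin J => (J:ℝ)⁻¹)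
    (fun j : Fin J => g (j:ℕ) / g ((j:ℕ)+1))
    (fun _ _ => by positivity) hsum
    (fun j _ => le_of_lt (div_pos (hgpos _) (hgpos _)))
  have hprod : ∏ j : Fin J, (g (j:ℕ) / g ((j:ℕ)+1)) ^ ((J:ℝ)⁻¹)
      = (((mball x (Δ/8^t/4)).card : ℝ) / ((mball x (Δ/8^t/2)).card : ℝ)) ^ ((J:ℝ)⁻¹) := by
    rw [Real.finset_prod_rpow _ _ (fun j _ => le_of_lt (div_pos (hgpos _) (hgpos _)))]
    congr 1
    rw [Fin.prod_univ_eq_prod_range (fun j => g j / g (j+1)) J,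
      telescope_div g (fun i => ne_of_gt (hgpos i)) J]
    have e0 : Δ/8^t/4 + 2*((0:ℕ):ℝ)*(Δ/8^t/(8*(J:ℝ))) = Δ/8^t/4 := by push_cast; ring
    have eJ : Δ/8^t/4 + 2*((J:ℕ):ℝ)*(Δ/8^t/(8*(J:ℝ))) = Δ/8^t/2 := by
      field_simp
      ring
    simp only [hgdef, e0, eJ]
  have hrhs : ∑ j : Fin J, ((J:ℝ)⁻¹) * (g (j:ℕ) / g ((j:ℕ)+1))
      = (J:ℝ)⁻¹ * ∑ j : Fin J, (g (j:ℕ) / g ((j:ℕ)+1)) := by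
    rw [Finset.mul_sum]
  rw [hprod, hrhs] at amgm
  rw [count_evt hΔ hJ x t]
  rw [Finset.sum_congr rfl (fun j _ => hq j)]
  have hPnn : (0:ℝ) ≤ (Fintype.card (X ≃ X) : ℝ) := by positivity
  have key : (J:ℝ) * ((((mball x (Δ/8^t/4)).card : ℝ) / ((mball x (Δ/8^t/2)).card : ℝ))
        ^ ((J:ℝ)⁻¹)) ≤ ∑ j : Fin J, (g (j:ℕ) / g ((j:ℕ)+1)) := by
    have h2 := mul_le_mul_of_nonneg_left amgm (le_of_lt hJR)
    rwa [← mul_assoc, mul_inv_cancel₀ hJ0, one_mul] at h2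
  calc (Fintype.card (X ≃ X) : ℝ) * J * ((((mball x (Δ/8^t/4)).card : ℝ)
        / ((mball x (Δ/8^t/2)).card : ℝ)) ^ ((J:ℝ)⁻¹))
      = (Fintype.card (X ≃ X) : ℝ) * ((J:ℝ) * ((((mball x (Δ/8^t/4)).card : ℝ)
        / ((mball x (Δ/8^t/2)).card : ℝ)) ^ ((J:ℝ)⁻¹))) := by ring
    _ ≤ (Fintype.card (X ≃ X) : ℝ) * ∑ j : Fin J, (g (j:ℕ) / g ((j:ℕ)+1)) :=
        mul_le_mul_of_nonneg_left key hPnn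

end Count2

end Stmt10

namespace Stmt10

section Count3

open scoped Classical

variable {X : Type} [Fintype X] [MetricSpace X] {Δ : ℝ} {J T : ℕ}

lemma telescope_ge (u v : ℕ → ℝ) (hu : ∀ t, 0 < u t) (hv : ∀ t, 0 < v t)
    (hvu : ∀ t, v (t+1) ≤ u t) :
    ∀ m, u m / v 0 ≤ ∏ t ∈ Finset.range (m+1), (u t / v t) := by
  intro m
  induction m with
  | zero => simp
  | succ m ih =>
      rw [Finset.prod_range_succ]
      have hq : (0:ℝ) ≤ u (m+1) / v (m+1) := le_of_lt (div_pos (hu _) (hv _))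
      have h1 : (u m / v 0) * (u (m+1) / v (m+1))
          ≤ (∏ t ∈ Finset.range (m+1), (u t / v t)) * (u (m+1) / v (m+1)) :=
        mul_le_mul_of_nonneg_right ih hq
      have h2 : u (m+1) / v 0 ≤ (u m / v 0) * (u (m+1) / v (m+1)) := by
        have hfac : (1:ℝ) ≤ u m / v (m+1) := (one_le_div (hv _)).mpr (hvu m)
        have he : (u m / v 0) * (u (m+1) / v (m+1))
            = (u (m+1) / v 0) * (u m / v (m+1)) := by ring
        rw [he]
        nth_rewrite 1 [← mul_one (u (m+1) / v 0)]
        exact mul_le_mul_of_nonneg_left hfac (le_of_lt (div_pos (hu _) (hv _)))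
      linarith

lemma pad_count (hΔ : 0 < Δ) (hJ : 1 ≤ J) (x : X) :
    (Fintype.card (Fin (T+1) → (X ≃ X) × Fin J) : ℝ)
        * ((Fintype.card X : ℝ) ^ (-((J:ℝ)⁻¹)))
      ≤ ((univ.filter fun ω : Fin (T+1) → (X ≃ X) × Fin J => Pad Δ J T ω x).card : ℝ) := by
  have hnpos : (0:ℝ) < (Fintype.card X : ℝ) := by
    have : 0 < Fintype.card X := Fintype.card_pos_iff.mpr ⟨x⟩
    exact_mod_cast this
  -- the per-scale quantities
  set u : ℕ → ℝ := fun t => ((mball x (Δ/8^t/4)).card : ℝ) with hu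
  set v : ℕ → ℝ := fun t => ((mball x (Δ/8^t/2)).card : ℝ) with hv
  have hupos : ∀ t, 0 < u t := fun t =>
    Nat.cast_pos.mpr (mball_card_pos (x := x) (by positivity))
  have hvpos : ∀ t, 0 < v t := fun t =>
    Nat.cast_pos.mpr (mball_card_pos (x := x) (by positivity))
  have hvu : ∀ t, v (t+1) ≤ u t := by
    intro t
    apply Nat.cast_le.mpr
    apply Finset.card_le_card
    apply mball_mono
    have h8 : (0:ℝ) < 8^t := by positivity
    rw [pow_succ, div_div, div_div]
    apply div_le_div_of_nonneg_left (le_of_lt hΔ) (by positivity) ?_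
    nlinarith
  -- step 1 : product structure
  have h1 : (univ.filter fun ω : Fin (T+1) → (X ≃ X) × Fin J => Pad Δ J T ω x).card
      = ∏ t : Fin (T+1),
        (univ.filter fun p : (X ≃ X) × Fin J => padEvt Δ J (t:ℕ) p x).card := by
    have e1 : (univ.filter fun ω : Fin (T+1) → (X ≃ X) × Fin J => Pad Δ J T ω x).card
        = Fintype.card {ω : Fin (T+1) → (X ≃ X) × Fin J // Pad Δ J T ω x} :=
      (Fintype.card_subtype _).symm
    have e2 : Fintype.card {ω : Fin (T+1) → (X ≃ X) × Fin J // Pad Δ J T ω x}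
        = Fintype.card (∀ t : Fin (T+1), {p : (X ≃ X) × Fin J // padEvt Δ J (t:ℕ) p x}) :=
      Fintype.card_congr (Equiv.subtypePiEquivPi
        (p := fun (t : Fin (T+1)) (b : (X ≃ X) × Fin J) => padEvt Δ J (t:ℕ) b x))
    have e3 : Fintype.card (∀ t : Fin (T+1), {p : (X ≃ X) × Fin J // padEvt Δ J (t:ℕ) p x})
        = ∏ t : Fin (T+1), Fintype.card {p : (X ≃ X) × Fin J // padEvt Δ J (t:ℕ) p x} :=
      Fintype.card_pi
    rw [e1, e2, e3]
    exact Finset.prod_congr rfl (fun t _ => Fintype.card_subtype _)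
  rw [h1]
  push_cast
  -- step 2 : lower bound each factor
  have h2 : ∏ t : Fin (T+1), ((Fintype.card (X ≃ X) : ℝ) * J * ((u (t:ℕ) / v (t:ℕ)) ^ ((J:ℝ)⁻¹)))
      ≤ ∏ t : Fin (T+1),
        (((univ.filter fun p : (X ≃ X) × Fin J => padEvt Δ J (t:ℕ) p x).card : ℝ)) := by
    apply Finset.prod_le_prod
    · intro t _
      have : (0:ℝ) ≤ (u (t:ℕ) / v (t:ℕ)) ^ ((J:ℝ)⁻¹) :=
        Real.rpow_nonneg (le_of_lt (div_pos (hupos _) (hvpos _))) _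
      positivity
    · intro t _
      exact scale_bound hΔ hJ x (t:ℕ)
  refine le_trans ?_ h2
  -- step 3 : compute the lower product
  have h3 : ∏ t : Fin (T+1), ((Fintype.card (X ≃ X) : ℝ) * J * ((u (t:ℕ) / v (t:ℕ)) ^ ((J:ℝ)⁻¹)))
      = ((Fintype.card (X ≃ X) : ℝ) * J)^(T+1)
        * (∏ t : Fin (T+1), (u (t:ℕ) / v (t:ℕ))) ^ ((J:ℝ)⁻¹) := by
    rw [Finset.prod_mul_distrib, Finset.prod_const, Finset.card_univ, Fintype.card_fin,
      Real.finset_prod_rpow _ _ (fun t _ => le_of_lt (div_pos (hupos _) (hvpos _)))]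
  rw [h3]
  have h4 : (Fintype.card X : ℝ)⁻¹ ≤ ∏ t : Fin (T+1), (u (t:ℕ) / v (t:ℕ)) := by
    rw [Fin.prod_univ_eq_prod_range (fun t => u t / v t) (T+1)]
    refine le_trans ?_ (telescope_ge u v hupos hvpos hvu T)
    have hu1 : (1:ℝ) ≤ u T := by
      have h := mball_card_pos (x := x) (r := Δ/8^T/4) (by positivity)
      have : (1:ℝ) ≤ ((mball x (Δ/8^T/4)).card : ℝ) := by exact_mod_cast h
      exact this
    have hv0 : v 0 ≤ (Fintype.card X : ℝ) := by
      have h : (mball x (Δ/8^0/2)).card ≤ Fintype.card X := by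
        rw [← Finset.card_univ]
        exact Finset.card_le_card (Finset.subset_univ _)
      have : ((mball x (Δ/8^0/2)).card : ℝ) ≤ (Fintype.card X : ℝ) := by exact_mod_cast h
      exact this
    rw [inv_eq_one_div, div_le_div_iff₀ hnpos (hvpos 0)]
    nlinarith [hupos T, hvpos 0]
  have h5 : (Fintype.card X : ℝ) ^ (-((J:ℝ)⁻¹))
      ≤ (∏ t : Fin (T+1), (u (t:ℕ) / v (t:ℕ))) ^ ((J:ℝ)⁻¹) := by
    have e : (Fintype.card X : ℝ) ^ (-((J:ℝ)⁻¹))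
        = ((Fintype.card X : ℝ)⁻¹) ^ ((J:ℝ)⁻¹) := by
      rw [Real.inv_rpow (le_of_lt hnpos), ← Real.rpow_neg (le_of_lt hnpos)]
    rw [e]
    exact Real.rpow_le_rpow (inv_nonneg.mpr (le_of_lt hnpos)) h4 (by positivity)
  have h6 : (Fintype.card (Fin (T+1) → (X ≃ X) × Fin J) : ℝ)
      = ((Fintype.card (X ≃ X) : ℝ) * J)^(T+1) := by
    rw [Fintype.card_fun, Fintype.card_prod, Fintype.card_fin, Fintype.card_fin]
    push_cast
    ring
  rw [h6]
  apply mul_le_mul_of_nonneg_left h5 (by positivity)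

end Count3

end Stmt10

namespace Stmt10

open scoped Classical

lemma main {X : Type} [Fintype X] [MetricSpace X] {ε : ℝ} (hε : 0 < ε) (hε1 : ε < 1)
    (hcard : 2 ≤ Fintype.card X) :
    ∃ (ρ : X → X → ℝ) (X' : Finset X),
      IsUltrametric ρ ∧
      (Fintype.card X : ℝ) ^ (1 - ε) ≤ (X'.card : ℝ) ∧
      (∀ x y : X, dist x y ≤ ρ x y) ∧
      (∀ x ∈ X', ∀ y : X, ρ x y ≤ (128 / ε) * dist x y) := by
  obtain ⟨x₀, y₀, hxy₀⟩ := Fintype.exists_pair_of_one_lt_card (show 1 < Fintype.card X by omega)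
  have hbdd : Bornology.IsBounded (Set.univ : Set X) := Set.finite_univ.isBounded
  set Δ := Metric.diam (Set.univ : Set X) with hΔdef
  have hdiam : ∀ x y : X, dist x y ≤ Δ :=
    fun x y => Metric.dist_le_diam_of_mem hbdd (Set.mem_univ x) (Set.mem_univ y)
  have hΔ : 0 < Δ := lt_of_lt_of_le (dist_pos.mpr hxy₀) (hdiam x₀ y₀)
  -- minimum separation
  set P : Finset ℝ := (univ : Finset X).offDiag.image (fun p => dist p.1 p.2) with hP
  have hPne : P.Nonempty := ⟨dist x₀ y₀, Finset.mem_image.mpr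
    ⟨(x₀, y₀), Finset.mem_offDiag.mpr ⟨mem_univ _, mem_univ _, hxy₀⟩, rfl⟩⟩
  set δ := P.min' hPne with hδdef
  have hδpos : 0 < δ := by
    obtain ⟨p, hp, hpd⟩ := Finset.mem_image.mp (P.min'_mem hPne)
    have hne := (Finset.mem_offDiag.mp hp).2.2
    calc (0:ℝ) < dist p.1 p.2 := dist_pos.mpr hne
      _ = δ := hpd
  have hδle : ∀ x y : X, x ≠ y → δ ≤ dist x y := by
    intro x y h
    apply Finset.min'_le
    exact Finset.mem_image.mpr ⟨(x, y), Finset.mem_offDiag.mpr ⟨mem_univ _, mem_univ _, h⟩, rfl⟩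
  -- number of scales
  obtain ⟨T, hT⟩ := pow_unbounded_of_one_lt (Δ/δ) (by norm_num : (1:ℝ) < 8)
  have hTsep : ∀ x y : X, x ≠ y → Δ/8^T < dist x y := by
    intro x y h
    have h8 : (0:ℝ) < 8^T := by positivity
    have : Δ/8^T < δ := by
      rw [div_lt_iff₀ h8]
      rw [div_lt_iff₀ hδpos] at hT
      nlinarith
    exact lt_of_lt_of_le this (hδle x y h)
  -- number of radii
  set J := ⌈1/ε⌉₊ with hJdef
  have hJ1 : 1 ≤ J := by
    rw [hJdef]
    exact Nat.one_le_iff_ne_zero.mpr (by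
      intro h
      have := Nat.ceil_eq_zero.mp h
      have h0 : (0:ℝ) < 1/ε := by positivity
      linarith)
  have hJpos : (0:ℝ) < (J:ℝ) := by exact_mod_cast hJ1
  have hJle : 1/ε ≤ (J:ℝ) := Nat.le_ceil _
  have hJinv : (J:ℝ)⁻¹ ≤ ε := by
    rw [inv_le_comm₀ hJpos hε]
    rwa [← one_div]
  have hJup : (J:ℝ) ≤ 2/ε := by
    have h1 : (J:ℝ) < 1/ε + 1 := Nat.ceil_lt_add_one (by positivity)
    have h2 : (1:ℝ) ≤ 1/ε := by
      rw [le_div_iff₀ hε]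
      linarith
    have : 1/ε + 1 ≤ 2/ε := by
      have : (2:ℝ)/ε = 1/ε + 1/ε := by ring
      linarith
    linarith
  -- choose a good outcome by averaging
  have hnpos : (0:ℝ) < (Fintype.card X : ℝ) := by
    have : 0 < Fintype.card X := by omega
    exact_mod_cast this
  have hn1 : (1:ℝ) < (Fintype.card X : ℝ) := by exact_mod_cast (by omega : 1 < Fintype.card X)
  have hkey : ∃ ω : Fin (T+1) → (X ≃ X) × Fin J,
      (Fintype.card X : ℝ) ^ (1-ε) ≤ ((univ.filter fun z => Pad Δ J T ω z).card : ℝ) := by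
    by_contra hcon
    push_neg at hcon
    have hΩne : (univ : Finset (Fin (T+1) → (X ≃ X) × Fin J)).Nonempty := by
      have : Nonempty (Fin (T+1) → (X ≃ X) × Fin J) :=
        ⟨fun _ => (Equiv.refl X, ⟨0, Nat.lt_of_lt_of_le Nat.zero_lt_one hJ1⟩)⟩
      exact univ_nonempty
    have hup : ∑ ω : Fin (T+1) → (X ≃ X) × Fin J,
        ((univ.filter fun z => Pad Δ J T ω z).card : ℝ)
        < ∑ _ω : Fin (T+1) → (X ≃ X) × Fin J, (Fintype.card X : ℝ) ^ (1-ε) :=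
      Finset.sum_lt_sum_of_nonempty hΩne (fun ω _ => hcon ω)
    have hswap : ∑ ω : Fin (T+1) → (X ≃ X) × Fin J,
        ((univ.filter fun z => Pad Δ J T ω z).card : ℝ)
        = ∑ z : X, ((univ.filter fun ω : Fin (T+1) → (X ≃ X) × Fin J =>
            Pad Δ J T ω z).card : ℝ) := by
      have e : ∀ (s : Finset (Fin (T+1) → (X ≃ X) × Fin J)) (z : X), True := fun _ _ => trivial
      simp only [Finset.card_filter]
      push_cast
      rw [Finset.sum_comm]
    have hlow : ∀ z : X, (Fintype.card (Fin (T+1) → (X ≃ X) × Fin J) : ℝ)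
        * ((Fintype.card X : ℝ) ^ (-((J:ℝ)⁻¹)))
        ≤ ((univ.filter fun ω : Fin (T+1) → (X ≃ X) × Fin J => Pad Δ J T ω z).card : ℝ) :=
      fun z => pad_count hΔ hJ1 z
    have hsum_low : (Fintype.card X : ℝ) * ((Fintype.card (Fin (T+1) → (X ≃ X) × Fin J) : ℝ)
        * ((Fintype.card X : ℝ) ^ (-((J:ℝ)⁻¹))))
        ≤ ∑ z : X, ((univ.filter fun ω : Fin (T+1) → (X ≃ X) × Fin J =>
            Pad Δ J T ω z).card : ℝ) := by
      calc (Fintype.card X : ℝ) * ((Fintype.card (Fin (T+1) → (X ≃ X) × Fin J) : ℝ)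
          * ((Fintype.card X : ℝ) ^ (-((J:ℝ)⁻¹))))
          = ∑ _z : X, ((Fintype.card (Fin (T+1) → (X ≃ X) × Fin J) : ℝ)
            * ((Fintype.card X : ℝ) ^ (-((J:ℝ)⁻¹)))) := by
            rw [Finset.sum_const, Finset.card_univ, nsmul_eq_mul]
        _ ≤ _ := Finset.sum_le_sum (fun z _ => hlow z)
    have hrpow : (Fintype.card X : ℝ) ^ (1-ε)
        ≤ (Fintype.card X : ℝ) * ((Fintype.card X : ℝ) ^ (-((J:ℝ)⁻¹))) := by
      have e1 : (Fintype.card X : ℝ) * ((Fintype.card X : ℝ) ^ (-((J:ℝ)⁻¹)))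
          = (Fintype.card X : ℝ) ^ (1 + (-((J:ℝ)⁻¹))) := by
        rw [Real.rpow_add hnpos, Real.rpow_one]
      rw [e1]
      apply (Real.rpow_le_rpow_left_iff hn1).mpr
      linarith
    have hsum_up : ∑ _ω : Fin (T+1) → (X ≃ X) × Fin J, (Fintype.card X : ℝ) ^ (1-ε)
        = (Fintype.card (Fin (T+1) → (X ≃ X) × Fin J) : ℝ) * (Fintype.card X : ℝ) ^ (1-ε) := by
      rw [Finset.sum_const, Finset.card_univ, nsmul_eq_mul]
    rw [hswap] at hup
    rw [hsum_up] at hup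
    have hΩpos : (0:ℝ) < (Fintype.card (Fin (T+1) → (X ≃ X) × Fin J) : ℝ) := by
      have : Nonempty (Fin J) := ⟨⟨0, Nat.lt_of_lt_of_le Nat.zero_lt_one hJ1⟩⟩
      have : 0 < Fintype.card (Fin (T+1) → (X ≃ X) × Fin J) := Fintype.card_pos
      exact_mod_cast this
    nlinarith [hsum_low, hrpow, hΩpos]
  obtain ⟨ω, hω⟩ := hkey
  refine ⟨rho Δ J T ω, univ.filter (fun z => Pad Δ J T ω z), ?_, hω, ?_, ?_⟩
  · exact rho_ultra hΔ hJ1 hTsep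
  · exact rho_noncontract hΔ hJ1 hTsep hdiam
  · intro x hx y
    rw [Finset.mem_filter] at hx
    have h1 := rho_pad_le hΔ hJ1 hTsep hx.2 y
    have h2 : 64*(J:ℝ) ≤ 128/ε := by
      have : 64*(J:ℝ) ≤ 64*(2/ε) := by nlinarith
      calc 64*(J:ℝ) ≤ 64*(2/ε) := this
        _ = 128/ε := by ring
    calc rho Δ J T ω x y ≤ 64*(J:ℝ)*dist x y := h1
      _ ≤ (128/ε) * dist x y := mul_le_mul_of_nonneg_right h2 dist_nonneg

end Stmt10

/-- Ramsey embedding theorem: for every `ε > 0`, every `n`-point metric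
space admits a non-contractive embedding of the whole space into an ultrametric together
with a core subspace of size `≥ n^{1-ε}`, such that pairs touching the core have
distortion `O(1/ε)`. -/

theorem stmt_10 :
    ∃ C : ℝ, 0 < C ∧
      ∀ (X : Type) [Fintype X] [MetricSpace X] (ε : ℝ), 0 < ε → ε < 1 →
        ∃ (U : Type) (ρ : U → U → ℝ) (f : X → U) (X' : Finset X),
          IsUltrametric ρ ∧
          (Fintype.card X : ℝ) ^ (1 - ε) ≤ (X'.card : ℝ) ∧
          (∀ x y : X, dist x y ≤ ρ (f x) (f y)) ∧
          (∀ x ∈ X', ∀ y : X, ρ (f x) (f y) ≤ (C / ε) * dist x y) := by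
  classical
  refine ⟨128, by norm_num, ?_⟩
  intro X _ _ ε hε hε1
  by_cases h2 : 2 ≤ Fintype.card X
  · obtain ⟨ρ, X', hu, hbig, hnc, hdist⟩ := Stmt10.main hε hε1 h2
    exact ⟨X, ρ, id, X', hu, hbig, hnc, hdist⟩
  · push_neg at h2
    have hsub : Subsingleton X := by
      apply Fintype.card_le_one_iff_subsingleton.mp
      omega
    refine ⟨PUnit, fun _ _ => 0, fun _ => PUnit.unit, Finset.univ, ?_, ?_, ?_, ?_⟩
    · refine ⟨fun _ _ => le_refl 0, fun x y => ⟨fun _ => Subsingleton.elim x y, fun _ => rfl⟩,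
        fun _ _ => rfl, fun _ _ _ => ?_⟩
      simp
    · interval_cases h : Fintype.card X
      · have : (univ : Finset X).card = 0 := by
          rw [Finset.card_univ, h]
        rw [this]
        push_cast
        rw [Real.zero_rpow (by linarith)]
      · have : (univ : Finset X).card = 1 := by
          rw [Finset.card_univ, h]
        rw [this]
        push_cast
        rw [Real.one_rpow]
    · intro x y
      rw [Subsingleton.elim x y, dist_self]
    · intro x _ y
      have : (0:ℝ) ≤ (128/ε) * dist x y := mul_nonneg (by positivity) dist_nonneg
      exact this
end

section
/- In the composition embedding f̂_X(u) = (β'γ·f_M(x)) ⊕ f̂_{N_x}(u) of X = M_{β'}[N] ∈ comp₂(M) into L_p (with β' ≥ 2 and each f_M non-expansive with ‖f_M(x)‖_p ≤ diam(M)), one has ‖f̂_X(u)‖_p ≤ 2·diam(X) for all u ∈ X. -/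
open scoped ENNReal Classical

lemma aux_rpow_add (a b t : ℝ) (ha : 0 ≤ a) (hb : 0 ≤ b) (ht : 1 ≤ t) :
    (a ^ t + b ^ t) ^ (1 / t) ≤ a + b := by
  lift a to NNReal using ha
  lift b to NNReal using hb
  have h := NNReal.rpow_add_rpow_le_add a b ht
  exact_mod_cast h

/-- the norm bound in the composition embedding.  For the composition
`X = M_{β'}[N]` (with `β' ≥ 2`), the embedding `f̂_X(u) = (β'γ·f_M(x)) ⊕ f̂_{N_x}(u)`
satisfies `‖f̂_X(u)‖_p ≤ 2·diam(X)`, given that `f_M` is non-expansive with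
`‖f_M(x)‖_p ≤ diam(M)` and inductively `‖f̂_{N_x}(u)‖_p ≤ 2·diam(N_x)`. -/
theorem stmt_13 (p : ℝ≥0∞) [Fact (1 ≤ p)] (hp : p ≠ ⊤)
    {M : Type} [Fintype M] [MetricSpace M] [Nontrivial M]
    (N : M → Type) [∀ x, Fintype (N x)] [∀ x, Nonempty (N x)]
    [∀ x, MetricSpace (N x)]
    (β' : ℝ) (hβ' : 2 ≤ β')
    (γ : ℝ)
    (hγ : γ = sSup (Set.range fun z : M => Metric.diam (Set.univ : Set (N z))) /
      sInf {r : ℝ | ∃ x y : M, x ≠ y ∧ r = dist x y})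
    (dC : (Σ x, N x) → (Σ x, N x) → ℝ)
    (hdC : ∀ u v : Σ x, N x, dC u v =
      if h : u.1 = v.1 then dist (h ▸ u.2 : N v.1) v.2
      else β' * γ * dist u.1 v.1)
    (diamX : ℝ)
    (hdiamX : diamX = sSup (Set.range fun q : (Σ x, N x) × (Σ x, N x) => dC q.1 q.2))
    (fM : M → lp (fun _ : ℕ => ℝ) p)
    (hfM_exp : ∀ x y : M, dist (fM x) (fM y) ≤ dist x y)
    (hfM_norm : ∀ x : M, ‖fM x‖ ≤ Metric.diam (Set.univ : Set M))
    (g : ∀ x : M, N x → lp (fun _ : ℕ => ℝ) p)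
    (hg : ∀ (x : M) (u : N x), ‖g x u‖ ≤ 2 * Metric.diam (Set.univ : Set (N x))) :
    ∀ (x : M) (u : N x),
      ((β' * γ * ‖fM x‖) ^ p.toReal + ‖g x u‖ ^ p.toReal) ^ (1 / p.toReal)
        ≤ 2 * diamX := by
  intro x u
  -- basic positivity facts
  have hβ'0 : (0:ℝ) < β' := lt_of_lt_of_le two_pos hβ'
  -- the set of distances between distinct points
  set S : Set ℝ := {r : ℝ | ∃ x y : M, x ≠ y ∧ r = dist x y} with hS
  have hSfin : S.Finite := by
    have : S ⊆ (fun q : M × M => dist q.1 q.2) '' Set.univ := by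
      rintro r ⟨a, b, hab, rfl⟩
      exact ⟨(a, b), trivial, rfl⟩
    exact (Set.finite_univ.image _).subset this
  have hSne : S.Nonempty := by
    obtain ⟨a, b, hab⟩ := exists_pair_ne M
    exact ⟨dist a b, a, b, hab, rfl⟩
  set D : ℝ := sInf S with hD
  have hDmem : D ∈ S := hSne.csInf_mem hSfin
  obtain ⟨x₀, y₀, hxy₀, hDxy⟩ := hDmem
  have hDpos : 0 < D := by rw [hDxy]; exact dist_pos.mpr hxy₀
  have hDle : ∀ a b : M, a ≠ b → D ≤ dist a b := fun a b hab =>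
    csInf_le (hSfin.bddBelow) ⟨a, b, hab, rfl⟩
  -- the sup of diameters of the fibers
  set G : ℝ := sSup (Set.range fun z : M => Metric.diam (Set.univ : Set (N z))) with hG
  have hGle : ∀ z : M, Metric.diam (Set.univ : Set (N z)) ≤ G := fun z =>
    le_csSup (Set.finite_range _).bddAbove ⟨z, rfl⟩
  have hG0 : 0 ≤ G := le_trans Metric.diam_nonneg (hGle x)
  have hγ0 : 0 ≤ γ := by rw [hγ]; exact div_nonneg hG0 hDpos.le
  have hγD : γ * D = G := by
    rw [hγ]; field_simp
  -- diamX bounds every dC value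
  have hdCle : ∀ u v : Σ x, N x, dC u v ≤ diamX := by
    intro a b
    rw [hdiamX]
    exact le_csSup (Set.finite_range _).bddAbove ⟨(a, b), rfl⟩
  have hdC_same : ∀ (z : M) (a b : N z), dC ⟨z, a⟩ ⟨z, b⟩ = dist a b := by
    intro z a b
    rw [hdC]; simp
  have hdC_ne : ∀ (z w : M), z ≠ w → ∀ (a : N z) (b : N w),
      dC ⟨z, a⟩ ⟨w, b⟩ = β' * γ * dist z w := by
    intro z w hzw a b
    rw [hdC]; simp [hzw]
  have hX0 : 0 ≤ diamX := by
    have := hdCle ⟨x, u⟩ ⟨x, u⟩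
    rw [hdC_same] at this
    simpa using this
  -- diamX ≥ β' * γ * diam M
  have h2 : β' * γ * Metric.diam (Set.univ : Set M) ≤ diamX := by
    rcases eq_or_lt_of_le hγ0 with hγeq | hγpos
    · rw [← hγeq]; simpa using hX0
    · have hbγ : 0 < β' * γ := mul_pos hβ'0 hγpos
      have hdiamM : Metric.diam (Set.univ : Set M) ≤ diamX / (β' * γ) := by
        apply Metric.diam_le_of_forall_dist_le (div_nonneg hX0 hbγ.le)
        intro a _ b _
        rcases eq_or_ne a b with rfl | hab
        · simp [div_nonneg hX0 hbγ.le]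
        · rw [le_div_iff₀ hbγ, mul_comm]
          have := hdCle ⟨a, Classical.arbitrary (N a)⟩ ⟨b, Classical.arbitrary (N b)⟩
          rwa [hdC_ne a b hab] at this
      calc β' * γ * Metric.diam (Set.univ : Set M)
          ≤ β' * γ * (diamX / (β' * γ)) :=
            mul_le_mul_of_nonneg_left hdiamM hbγ.le
        _ = diamX := by field_simp
  -- diamX ≥ 2 * G  (hence ≥ 2 * diam (N x))
  have h3 : 2 * G ≤ diamX := by
    have hkey : β' * γ * D ≤ diamX := by
      have := hdCle ⟨x₀, Classical.arbitrary (N x₀)⟩ ⟨y₀, Classical.arbitrary (N y₀)⟩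
      rw [hdC_ne x₀ y₀ hxy₀] at this
      rwa [← hDxy] at this
    calc 2 * G = 2 * (γ * D) := by rw [hγD]
      _ ≤ β' * (γ * D) := by
          apply mul_le_mul_of_nonneg_right hβ'
          rw [hγD]; exact hG0
      _ = β' * γ * D := by ring
      _ ≤ diamX := hkey
  -- now the main bound
  have ht : 1 ≤ p.toReal := by
    have h1 := (Fact.out : 1 ≤ p)
    calc (1:ℝ) = (1 : ℝ≥0∞).toReal := by simp
      _ ≤ p.toReal := ENNReal.toReal_mono hp h1
  have ha : 0 ≤ β' * γ * ‖fM x‖ :=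
    mul_nonneg (mul_nonneg hβ'0.le hγ0) (norm_nonneg _)
  have hmain := aux_rpow_add (β' * γ * ‖fM x‖) ‖g x u‖ p.toReal ha (norm_nonneg _) ht
  refine hmain.trans ?_
  have haX : β' * γ * ‖fM x‖ ≤ diamX := by
    refine le_trans ?_ h2
    exact mul_le_mul_of_nonneg_left (hfM_norm x) (mul_nonneg hβ'0.le hγ0)
  have hbX : ‖g x u‖ ≤ diamX := by
    refine (hg x u).trans (le_trans ?_ h3)
    exact mul_le_mul_of_nonneg_left (hGle x) two_pos.le
  linarith
end

section
/- Let (X,d) be a finite metric space and let the recursive Ramsey subspace construction with parameter t ≥ 2 produce, at each level on a current set Z, a partition (Q, Z∖Q) with P ⊆ Q satisfying d(P, Z∖Q) ≥ diam(Z)/(8t), recursing on P and Z∖Q, and labeling the root by diam(S(Z)) where S(Z) = S(P) ∪ S(Z∖Q). Then the identity map from S(X) to the resulting ultrametric U is non-contractive with distortion at most 8t. -/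
open Finset

/-- Binary hierarchy trees over a point set, modelling the recursive Ramsey construction:
each node corresponds to splitting the current point set into `S(P)` and `S(Z∖Q)`. -/
inductive RTree (X : Type) where
  | leaf : X → RTree X
  | node : RTree X → RTree X → RTree X

/-- The set of points (leaves) of the tree. -/
def RTree.leaves {X : Type} [DecidableEq X] : RTree X → Finset X
  | .leaf x => {x}
  | .node l r => l.leaves ∪ r.leaves

/-- The ultrametric (HST) distance determined by the tree: points separated at a node
are at distance the diameter of the leaf set of that node (its label). -/
noncomputable def RTree.tdist {X : Type} [DecidableEq X] [MetricSpace X] :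
    RTree X → X → X → ℝ
  | .leaf _, _, _ => 0
  | .node l r, x, y =>
    if x ∈ l.leaves ∧ y ∈ l.leaves then l.tdist x y
    else if x ∈ r.leaves ∧ y ∈ r.leaves then r.tdist x y
    else Metric.diam (((l.leaves ∪ r.leaves : Finset X) : Set X))

/-- The tree arises from a Ramsey decomposition with parameter `t`: at every node the
two sides are disjoint and separated by at least `diam/(8t)`, where `diam` is the
diameter of the node's leaf set (the label `diam(S(Z))`). -/
def RTree.Good {X : Type} [DecidableEq X] [MetricSpace X] (t : ℕ) : RTree X → Prop
  | .leaf _ => True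
  | .node l r => l.Good t ∧ r.Good t ∧ Disjoint l.leaves r.leaves ∧
      ∀ x ∈ l.leaves, ∀ y ∈ r.leaves,
        Metric.diam (((l.leaves ∪ r.leaves : Finset X) : Set X)) / (8 * t) ≤ dist x y

/-- the identity map from the Ramsey subspace into the ultrametric built
by the recursive construction is non-contractive with distortion at most `8t`. -/
theorem stmt_17 {X : Type} [DecidableEq X] [MetricSpace X] (t : ℕ) (ht : 2 ≤ t)
    (T : RTree X) (hT : T.Good t) :
    ∀ x ∈ T.leaves, ∀ y ∈ T.leaves,
      dist x y ≤ T.tdist x y ∧ T.tdist x y ≤ (8 * t) * dist x y := by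
  have ht8 : (0:ℝ) < 8 * t := by positivity
  induction T with
  | leaf a =>
    intro x hx y hy
    simp only [RTree.leaves, Finset.mem_singleton] at hx hy
    subst hx; subst hy
    simp [RTree.tdist]
  | node l r ihl ihr =>
    obtain ⟨hl, hr, hdisj, hsep⟩ := hT
    intro x hx y hy
    have hbd : Bornology.IsBounded (((l.leaves ∪ r.leaves : Finset X) : Set X)) :=
      (Set.toFinite _).isBounded
    simp only [RTree.leaves, Finset.mem_union] at hx hy
    -- general lemma for the "separated" case
    have sep : ∀ x ∈ l.leaves, ∀ y ∈ r.leaves,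
        dist x y ≤ Metric.diam (((l.leaves ∪ r.leaves : Finset X) : Set X)) ∧
        Metric.diam (((l.leaves ∪ r.leaves : Finset X) : Set X)) ≤ (8 * t) * dist x y := by
      intro a ha b hb
      constructor
      · exact Metric.dist_le_diam_of_mem hbd (by simp [ha]) (by simp [hb])
      · have := hsep a ha b hb
        rw [div_le_iff₀ ht8] at this
        linarith [this]
    rcases hx with hx | hx <;> rcases hy with hy | hy
    · have hyl : ¬ y ∈ r.leaves ∨ True := Or.inr trivial
      simp only [RTree.tdist, if_pos (And.intro hx hy)]
      exact ihl hl x hx y hy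
    · have hxr : x ∉ r.leaves := Finset.disjoint_left.mp hdisj hx
      have hyl : y ∉ l.leaves := Finset.disjoint_right.mp hdisj hy
      simp only [RTree.tdist]
      rw [if_neg (by tauto), if_neg (by tauto)]
      exact sep x hx y hy
    · have hxl : x ∉ l.leaves := Finset.disjoint_right.mp hdisj hx
      have hyr : y ∉ r.leaves := Finset.disjoint_left.mp hdisj hy
      simp only [RTree.tdist]
      rw [if_neg (by tauto), if_neg (by tauto)]
      have h := sep y hy x hx
      rw [dist_comm] at h
      exact h
    · have hxl : x ∉ l.leaves := Finset.disjoint_right.mp hdisj hx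
      simp only [RTree.tdist]
      rw [if_neg (by tauto), if_pos (And.intro hx hy)]
      exact ihr hr x hx y hy
end

section
/- Let w: X → ℝ⁺ and ψ = 1 − 1/t with t ≥ 2 integer. Suppose subsets P ⊆ Q ⊆ Z and Q̄ = Z∖Q satisfy w(P) ≥ w(Q)·(β(Z)/β(Q))^{-1/t}, and inductively w^ψ(S(P)) ≥ w(P)·β(P)^{-1/t} and w^ψ(S(Q̄)) ≥ w(Q̄)·β(Q̄)^{-1/t}, with β(P) ≤ β(Q) and β(Q̄) ≤ β(Z). Then for S(Z) = S(P) ∪ S(Q̄) (disjoint), w^ψ(S(Z)) ≥ w(Z)·β(Z)^{-1/t}. -/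
/-- the inductive weight-counting step in the proof of `χ_UM(8t) ≥ 1-1/t`.
Here `wP, wQ, wQbar` are the weights of `P, Q, Z∖Q`, `βZ, βQ, βP, βQbar` the spherical
weights, and `sP, sQbar` stand for `w^ψ(S(P))` and `w^ψ(S(Z∖Q))`. -/
theorem stmt_18 (t : ℕ) (ht : 2 ≤ t)
    (wP wQ wQbar sP sQbar : ℝ) (βZ βQ βP βQbar : ℝ)
    (hwP : 0 ≤ wP) (hwQ : 0 ≤ wQ) (hwQbar : 0 ≤ wQbar)
    (hβZ : 0 < βZ) (hβQ : 0 < βQ) (hβP : 0 < βP) (hβQbar : 0 < βQbar)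
    (hP : wP ≥ wQ * (βZ / βQ) ^ (-(1 : ℝ) / t))
    (hSP : sP ≥ wP * βP ^ (-(1 : ℝ) / t))
    (hSQbar : sQbar ≥ wQbar * βQbar ^ (-(1 : ℝ) / t))
    (hβPQ : βP ≤ βQ) (hβQbarZ : βQbar ≤ βZ) :
    sP + sQbar ≥ (wQ + wQbar) * βZ ^ (-(1 : ℝ) / t) := by
  set e : ℝ := -(1 : ℝ) / t with he
  have ht0 : (0:ℝ) < t := by positivity
  have he0 : e ≤ 0 := by
    rw [he]
    apply div_nonpos_of_nonpos_of_nonneg <;> linarith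
  have h1 : βQ ^ e ≤ βP ^ e := Real.rpow_le_rpow_of_nonpos hβP hβPQ he0
  have h2 : βZ ^ e ≤ βQbar ^ e := Real.rpow_le_rpow_of_nonpos hβQbar hβQbarZ he0
  have hdiv : (βZ / βQ) ^ e * βQ ^ e = βZ ^ e := by
    rw [Real.div_rpow hβZ.le hβQ.le, div_mul_cancel₀]
    exact (Real.rpow_pos_of_pos hβQ e).ne'
  have hnn : 0 ≤ wQ * (βZ / βQ) ^ e := by positivity
  have hsP : wQ * βZ ^ e ≤ sP := by
    calc wQ * βZ ^ e = wQ * (βZ / βQ) ^ e * βQ ^ e := by rw [mul_assoc, hdiv]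
    _ ≤ wQ * (βZ / βQ) ^ e * βP ^ e := by
        exact mul_le_mul_of_nonneg_left h1 hnn
    _ ≤ wP * βP ^ e := by
        exact mul_le_mul_of_nonneg_right hP (Real.rpow_pos_of_pos hβP e).le
    _ ≤ sP := hSP
  have hsQ : wQbar * βZ ^ e ≤ sQbar := by
    calc wQbar * βZ ^ e ≤ wQbar * βQbar ^ e := mul_le_mul_of_nonneg_left h2 hwQbar
    _ ≤ sQbar := hSQbar
  nlinarith [Real.rpow_pos_of_pos hβZ e]
end
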